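/- arXiv:2605.28402 — 2 statements merged into one kernel-verified Lean document; each statement's English description precedes it below -/
import Mathlib

section
/- Let r, s ≥ 0 be integers with n = 2(r+s) ≥ 1, and let v ∈ (ℤ/4ℤ)^n have type (t₀, t₁, t₂, t₃). Then C(n; t₀,t₁,t₂,t₃) · λ(v) = C(n; r,s,r,s) · c, where c is the coefficient of x^{t₀} y^{t₁} z^{t₂} w^{t₃} in the integer polynomial ((x+z)² − (y+w)²)^r · ((x−z)² + (y−w)²)^s. -/
/-!
For `u` of type `t` and `L_k = ∑_j i^{kj} X_j`, the character sum `∑_{b of type m} i^{u·b}` is the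
coefficient of `X^m` in `∏_i L_{u_i} = ∏_k L_k^{t_k}`. Summing over all `u` of type `t` and `b` of
type `m` and exchanging the roles of `u` and `b` gives
`#(type t) · [X^m] ∏_k L_k^{t_k} = #(type m) · [X^t] ∏_k L_k^{m_k}`, and the number of vectors of a
given type is a multinomial coefficient. For `t` the type of `v` and `m = (r,s,r,s)`, the left
coefficient is `λ(v)`, since `b ↦ -b` matches `S(v,1)` with `S(v,3)`, and on the right
`L_0 L_2 = (x+z)² - (y+w)²` and `L_1 L_3 = (x-z)² + (y-w)²`.
-/

/-- The number of coordinates of `v ∈ (ℤ/4ℤ)^n` equal to `k`. -/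
def typeCount {n : ℕ} (v : Fin n → ZMod 4) (k : ZMod 4) : ℕ :=
  (Finset.univ.filter fun i => v i = k).card

/-- `v ∈ (ℤ/4ℤ)^n` has type `(t₀, t₁, t₂, t₃)`. -/
def HasType {n : ℕ} (v : Fin n → ZMod 4) (t0 t1 t2 t3 : ℕ) : Prop :=
  typeCount v 0 = t0 ∧ typeCount v 1 = t1 ∧ typeCount v 2 = t2 ∧ typeCount v 3 = t3

instance {n : ℕ} (v : Fin n → ZMod 4) (t0 t1 t2 t3 : ℕ) :
    Decidable (HasType v t0 t1 t2 t3) := by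
  unfold HasType; infer_instance

/-- `|S(v, a)|`: the number of vectors `b` of type `(r, s, r, s)` with
`v · b = a` in `ℤ/4ℤ`. -/
def Scard {n : ℕ} (r s : ℕ) (v : Fin n → ZMod 4) (a : ZMod 4) : ℕ :=
  (Finset.univ.filter fun b : Fin n → ZMod 4 =>
    HasType b r s r s ∧ (∑ i, v i * b i) = a).card

/-- The eigenvalue `λ(v) = |S(v,0)| - |S(v,2)|` of `Cay((ℤ/4ℤ)^n, S)`. -/
def lambdaEV {n : ℕ} (r s : ℕ) (v : Fin n → ZMod 4) : ℤ :=
  (Scard r s v 0 : ℤ) - (Scard r s v 2 : ℤ)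

/-- The multinomial coefficient `C(n; r, s, r, s)` (with `n = 2(r+s)`). -/
def multinomRSRS (r s : ℕ) : ℕ :=
  Nat.multinomial Finset.univ ![r, s, r, s]

open Finset MvPolynomial

noncomputable section

section Types

variable {ι α R : Type*} [Fintype ι]

def typeOf (f : ι → α) : α →₀ ℕ := ∑ i, Finsupp.single (f i) 1

lemma typeOf_apply [DecidableEq α] (f : ι → α) (a : α) : typeOf f a = #{i | f i = a} := by
  rw [typeOf, Finsupp.finsetSum_apply, card_filter]
  simp only [Finsupp.single_apply]

lemma sum_typeOf_apply [Fintype α] (f : ι → α) : ∑ a, typeOf f a = Fintype.card ι := by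
  classical
  simp_rw [typeOf_apply]
  rw [← card_eq_sum_card_fiberwise (fun i _ => mem_univ (f i)), card_univ]

lemma prod_comp_eq_prod_pow_typeOf [Fintype α] [DecidableEq α] [CommMonoid R]
    (g : α → R) (f : ι → α) : ∏ i, g (f i) = ∏ a, g a ^ typeOf f a := by
  rw [← prod_fiberwise' univ f g]
  exact prod_congr rfl fun a _ => by rw [prod_const, typeOf_apply]

variable [CommSemiring R] [Fintype α] [DecidableEq α] [DecidableEq ι]

lemma coeff_prod_sum_C_mul_X (c : ι → α → R) (m : α →₀ ℕ) :
    coeff m (∏ i, ∑ a, C (c i a) * X a) = ∑ f : ι → α with typeOf f = m, ∏ i, c i (f i) := by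
  have hmon (f : ι → α) :
      ∏ i, C (c i (f i)) * (X (f i) : MvPolynomial α R) = monomial (typeOf f) (∏ i, c i (f i)) := by
    simp_rw [prod_mul_distrib, ← map_prod, X, ← monomial_sum_one, C_mul_monomial, mul_one, typeOf]
  rw [prod_univ_sum, Fintype.piFinset_univ]
  simp_rw [hmon, coeff_sum, coeff_monomial, sum_filter]

lemma card_typeOf_eq_multinomial (m : α →₀ ℕ) (hm : ∑ a, m a = Fintype.card ι) :
    #{f : ι → α | typeOf f = m} = Nat.multinomial univ m := by
  have h := coeff_prod_sum_C_mul_X (R := ℕ) (fun (_ : ι) _ => 1) m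
  simp only [map_one, one_mul, prod_const, card_univ, one_pow,
    coeff_sum_X_pow_of_fintype, Nat.cast_id, ← card_eq_sum_ones] at h
  rw [← h, Finsupp.sum_fintype _ _ (fun _ => rfl), if_pos hm,
    Finsupp.multinomial_eq_of_support_subset (subset_univ _)]

variable (ψ : α → α → R)

def linearForm (a : α) : MvPolynomial α R := ∑ b, C (ψ a b) * X b

def typePoly (t : α →₀ ℕ) : MvPolynomial α R := ∏ a, linearForm ψ a ^ t a

def typeSum (u : ι → α) (m : α →₀ ℕ) : R := ∑ b : ι → α with typeOf b = m, ∏ i, ψ (u i) (b i)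

lemma typeSum_eq_coeff_typePoly (u : ι → α) (m : α →₀ ℕ) :
    typeSum ψ u m = coeff m (typePoly ψ (typeOf u)) := by
  rw [typePoly, ← prod_comp_eq_prod_pow_typeOf, typeSum]
  exact (coeff_prod_sum_C_mul_X _ m).symm

lemma sum_typeSum_comm (hψ : ∀ a b, ψ a b = ψ b a) (t m : α →₀ ℕ) :
    ∑ u : ι → α with typeOf u = t, typeSum ψ u m =
      ∑ b : ι → α with typeOf b = m, typeSum ψ b t := by
  simp only [typeSum]
  rw [sum_comm]
  exact sum_congr rfl fun b _ => sum_congr rfl fun u _ => prod_congr rfl fun i _ => hψ _ _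

lemma sum_typeSum_eq_card_smul (t m : α →₀ ℕ) :
    ∑ u : ι → α with typeOf u = t, typeSum ψ u m =
      #{u : ι → α | typeOf u = t} • coeff m (typePoly ψ t) := by
  rw [← sum_const]
  exact sum_congr rfl fun u hu => by rw [typeSum_eq_coeff_typePoly, (mem_filter.1 hu).2]

lemma card_smul_coeff_typePoly_comm (hψ : ∀ a b, ψ a b = ψ b a) (t m : α →₀ ℕ) :
    #{u : ι → α | typeOf u = t} • coeff m (typePoly ψ t) =
      #{b : ι → α | typeOf b = m} • coeff t (typePoly ψ m) := by
  rw [← sum_typeSum_eq_card_smul, ← sum_typeSum_eq_card_smul, sum_typeSum_comm ψ hψ]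

end Types

lemma AddChar.map_sum_eq_prod {ι A M : Type*} [AddCommMonoid A] [CommMonoid M]
    (χ : AddChar A M) (s : Finset ι) (f : ι → A) : χ (∑ i ∈ s, f i) = ∏ i ∈ s, χ (f i) := by
  induction s using Finset.cons_induction with
  | empty => exact χ.map_zero_eq_one
  | cons i s hi ih => rw [sum_cons, prod_cons, χ.map_add_eq_mul, ih]

-- `ZMod 4` is `Fin 4` by definition.
lemma sum_zmod_four {M : Type*} [AddCommMonoid M] (f : ZMod 4 → M) :
    ∑ a, f a = f 0 + f 1 + f 2 + f 3 :=
  Fin.sum_univ_four f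

lemma prod_zmod_four {M : Type*} [CommMonoid M] (f : ZMod 4 → M) :
    ∏ a, f a = f 0 * f 1 * f 2 * f 3 :=
  Fin.prod_univ_four f

lemma forall_zmod_four {P : ZMod 4 → Prop} : (∀ a, P a) ↔ P 0 ∧ P 1 ∧ P 2 ∧ P 3 :=
  ⟨fun h => ⟨h 0, h 1, h 2, h 3⟩, fun ⟨h0, h1, h2, h3⟩ a => by fin_cases a <;> assumption⟩

def iChar : AddChar (ZMod 4) ℂ := AddChar.zmodChar 4 Complex.I_pow_four

lemma iChar_zero : iChar 0 = 1 := AddChar.map_zero_eq_one _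

lemma iChar_one : iChar 1 = Complex.I := by
  rw [iChar, AddChar.zmodChar_apply, show (1 : ZMod 4).val = 1 from rfl, pow_one]

lemma iChar_two : iChar 2 = -1 := by
  rw [iChar, AddChar.zmodChar_apply, show (2 : ZMod 4).val = 2 from rfl, Complex.I_sq]

lemma iChar_three : iChar 3 = -Complex.I := by
  rw [iChar, AddChar.zmodChar_apply, show (3 : ZMod 4).val = 3 from rfl, pow_succ, Complex.I_sq,
    neg_one_mul]

def iPairing (a b : ZMod 4) : ℂ := iChar (a * b)

lemma iPairing_comm (a b : ZMod 4) : iPairing a b = iPairing b a := by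
  rw [iPairing, iPairing, mul_comm]

def quadType (t0 t1 t2 t3 : ℕ) : ZMod 4 →₀ ℕ :=
  Finsupp.single 0 t0 + Finsupp.single 1 t1 + Finsupp.single 2 t2 + Finsupp.single 3 t3

lemma mapDomain_finEquiv_eq_quadType (t0 t1 t2 t3 : ℕ) :
    (Finsupp.single 0 t0 + Finsupp.single 1 t1 + Finsupp.single 2 t2 + Finsupp.single 3 t3 :
      Fin 4 →₀ ℕ).mapDomain (ZMod.finEquiv 4) = quadType t0 t1 t2 t3 := by
  simp only [Finsupp.mapDomain_add, Finsupp.mapDomain_single]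
  rfl

lemma quadType_apply (t0 t1 t2 t3 : ℕ) :
    quadType t0 t1 t2 t3 0 = t0 ∧ quadType t0 t1 t2 t3 1 = t1 ∧
      quadType t0 t1 t2 t3 2 = t2 ∧ quadType t0 t1 t2 t3 3 = t3 := by
  simp +decide [quadType]

lemma hasType_iff_typeOf_eq {n : ℕ} (b : Fin n → ZMod 4) (t0 t1 t2 t3 : ℕ) :
    HasType b t0 t1 t2 t3 ↔ typeOf b = quadType t0 t1 t2 t3 := by
  obtain ⟨h0, h1, h2, h3⟩ := quadType_apply t0 t1 t2 t3
  rw [Finsupp.ext_iff, forall_zmod_four, h0, h1, h2, h3]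
  simp only [HasType, typeCount, typeOf_apply]

lemma typeCount_neg {n : ℕ} (b : Fin n → ZMod 4) (k : ZMod 4) :
    typeCount (-b) k = typeCount b (-k) := by
  simp only [typeCount, Pi.neg_apply, neg_eq_iff_eq_neg]

lemma hasType_neg_iff {n : ℕ} (b : Fin n → ZMod 4) (t0 t1 t2 t3 : ℕ) :
    HasType (-b) t0 t1 t2 t3 ↔ HasType b t0 t3 t2 t1 := by
  have h1 : -(1 : ZMod 4) = 3 := rfl
  have h2 : -(2 : ZMod 4) = 2 := rfl
  have h3 : -(3 : ZMod 4) = 1 := rfl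
  simp only [HasType, typeCount_neg, neg_zero, h1, h2, h3]
  tauto

lemma scard_neg {n : ℕ} (r s : ℕ) (v : Fin n → ZMod 4) (a : ZMod 4) :
    Scard r s v (-a) = Scard r s v a := by
  refine card_equiv (Equiv.neg _) fun b => ?_
  simp [hasType_neg_iff, sum_neg_distrib, neg_eq_iff_eq_neg]

lemma lambdaEV_eq_typeSum {n : ℕ} (r s : ℕ) (v : Fin n → ZMod 4) :
    (lambdaEV r s v : ℂ) = typeSum iPairing v (quadType r s r s) := by
  have hfiber (a : ZMod 4) :
      ∑ b ∈ {b : Fin n → ZMod 4 | HasType b r s r s} with ∑ i, v i * b i = a,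
        iChar (∑ i, v i * b i) = Scard r s v a * iChar a := by
    rw [sum_congr rfl fun b hb => by rw [(mem_filter.1 hb).2], sum_const, nsmul_eq_mul, Scard,
      filter_filter]
  have hS3 : Scard r s v 3 = Scard r s v 1 := scard_neg r s v 1
  calc (lambdaEV r s v : ℂ)
      = ∑ a, Scard r s v a * iChar a := by
        rw [sum_zmod_four, iChar_zero, iChar_one, iChar_two, iChar_three, hS3, lambdaEV]
        push_cast
        ring
    _ = ∑ b : Fin n → ZMod 4 with HasType b r s r s, iChar (∑ i, v i * b i) := by
        simp_rw [← hfiber]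
        exact sum_fiberwise _ _ _
    _ = typeSum iPairing v (quadType r s r s) := by
        simp_rw [typeSum, iPairing, ← AddChar.map_sum_eq_prod, hasType_iff_typeOf_eq]

lemma card_typeOf_eq_quadType {n : ℕ} (t0 t1 t2 t3 : ℕ) (h : t0 + t1 + t2 + t3 = n) :
    #{b : Fin n → ZMod 4 | typeOf b = quadType t0 t1 t2 t3} =
      Nat.multinomial univ ![t0, t1, t2, t3] := by
  obtain ⟨h0, h1, h2, h3⟩ := quadType_apply t0 t1 t2 t3
  rw [card_typeOf_eq_multinomial _ (by rw [sum_zmod_four, h0, h1, h2, h3, h, Fintype.card_fin]),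
    Nat.multinomial, Nat.multinomial, sum_zmod_four, prod_zmod_four, Fin.sum_univ_four,
    Fin.prod_univ_four, h0, h1, h2, h3]
  rfl

lemma linearForm_zero_mul_linearForm_two :
    linearForm iPairing 0 * linearForm iPairing 2 =
      ((X 0 + X 2) ^ 2 - (X 1 + X 3) ^ 2 : MvPolynomial (ZMod 4) ℂ) := by
  have h22 : (2 * 2 : ZMod 4) = 0 := rfl
  have h23 : (2 * 3 : ZMod 4) = 2 := rfl
  simp only [linearForm, iPairing, sum_zmod_four, zero_mul, mul_zero, mul_one, h22, h23,
    iChar_zero, iChar_two, map_one, map_neg]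
  ring

lemma linearForm_one_mul_linearForm_three :
    linearForm iPairing 1 * linearForm iPairing 3 =
      ((X 0 - X 2) ^ 2 + (X 1 - X 3) ^ 2 : MvPolynomial (ZMod 4) ℂ) := by
  have h32 : (3 * 2 : ZMod 4) = 2 := rfl
  have h33 : (3 * 3 : ZMod 4) = 1 := rfl
  have hI : (C Complex.I : MvPolynomial (ZMod 4) ℂ) ^ 2 = -1 := by
    rw [← C_pow, Complex.I_sq, map_neg, map_one]
  simp only [linearForm, iPairing, sum_zmod_four, mul_zero, one_mul, mul_one, h32, h33,
    iChar_zero, iChar_one, iChar_two, iChar_three, map_one, map_neg]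
  linear_combination (-(X 1 - X 3) ^ 2 : MvPolynomial (ZMod 4) ℂ) * hI

lemma typePoly_quadType_eq_map_rename (r s : ℕ) :
    typePoly iPairing (quadType r s r s) =
      map (Int.castRingHom ℂ) (rename (ZMod.finEquiv 4)
        (((X 0 + X 2) ^ 2 - (X 1 + X 3) ^ 2) ^ r * ((X 0 - X 2) ^ 2 + (X 1 - X 3) ^ 2) ^ s :
          MvPolynomial (Fin 4) ℤ)) := by
  obtain ⟨h0, h1, h2, h3⟩ := quadType_apply r s r s
  have he2 : ZMod.finEquiv 4 2 = 2 := rfl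
  have he3 : ZMod.finEquiv 4 3 = 3 := rfl
  calc typePoly iPairing (quadType r s r s)
      = (linearForm iPairing 0 * linearForm iPairing 2) ^ r *
          (linearForm iPairing 1 * linearForm iPairing 3) ^ s := by
        rw [typePoly, prod_zmod_four, h0, h1, h2, h3]
        ring
    _ = _ := by
        rw [linearForm_zero_mul_linearForm_two, linearForm_one_mul_linearForm_three]
        simp only [map_mul, map_pow, map_add, map_sub, rename_X, map_X, map_zero, map_one, he2, he3]

end

open MvPolynomial in
theorem eigenvalue_formula_general (r s n : ℕ) (hn : n = 2 * (r + s))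
    (v : Fin n → ZMod 4) (t0 t1 t2 t3 : ℕ) (hv : HasType v t0 t1 t2 t3) :
    (Nat.multinomial Finset.univ ![t0, t1, t2, t3] : ℤ) * lambdaEV r s v =
      (multinomRSRS r s : ℤ) *
        MvPolynomial.coeff
          (Finsupp.single 0 t0 + Finsupp.single 1 t1 +
            Finsupp.single 2 t2 + Finsupp.single 3 t3)
          (((X 0 + X 2) ^ 2 - (X 1 + X 3) ^ 2) ^ r *
            ((X 0 - X 2) ^ 2 + (X 1 - X 3) ^ 2) ^ s :
            MvPolynomial (Fin 4) ℤ) := by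
  have hvt : typeOf v = quadType t0 t1 t2 t3 := (hasType_iff_typeOf_eq v _ _ _ _).1 hv
  have ht : t0 + t1 + t2 + t3 = n := by
    obtain ⟨h0, h1, h2, h3⟩ := quadType_apply t0 t1 t2 t3
    rw [← Fintype.card_fin n, ← sum_typeOf_apply v, hvt, sum_zmod_four, h0, h1, h2, h3]
  have hdc := card_smul_coeff_typePoly_comm (ι := Fin n) iPairing iPairing_comm
    (quadType t0 t1 t2 t3) (quadType r s r s)
  rw [← hvt, ← typeSum_eq_coeff_typePoly, ← lambdaEV_eq_typeSum, hvt,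
    card_typeOf_eq_quadType _ _ _ _ ht, card_typeOf_eq_quadType _ _ _ _ (by omega),
    typePoly_quadType_eq_map_rename, ← mapDomain_finEquiv_eq_quadType, coeff_map,
    coeff_rename_mapDomain _ (ZMod.finEquiv 4).injective, eq_intCast, nsmul_eq_mul,
    nsmul_eq_mul] at hdc
  rw [multinomRSRS]
  exact_mod_cast hdc

open MvPolynomial in
/-- `C(n; t₀,t₁,t₂,t₃)·λ(v)` equals `C(n; r,s,r,s)` times the
coefficient of `x^{t₀} y^{t₁} z^{t₂} w^{t₃}` in
`((x+z)² - (y+w)²)^r ((x-z)² + (y-w)²)^s`. -/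
theorem eigenvalue_formula (r s n : ℕ) (hn : n = 2 * (r + s)) (hn1 : 1 ≤ n)
    (v : Fin n → ZMod 4) (t0 t1 t2 t3 : ℕ) (hv : HasType v t0 t1 t2 t3) :
    (Nat.multinomial Finset.univ ![t0, t1, t2, t3] : ℤ) * lambdaEV r s v =
      (multinomRSRS r s : ℤ) *
        MvPolynomial.coeff
          (Finsupp.single 0 t0 + Finsupp.single 1 t1 +
            Finsupp.single 2 t2 + Finsupp.single 3 t3)
          (((X 0 + X 2) ^ 2 - (X 1 + X 3) ^ 2) ^ r *
            ((X 0 - X 2) ^ 2 + (X 1 - X 3) ^ 2) ^ s :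
            MvPolynomial (Fin 4) ℤ) :=
  eigenvalue_formula_general r s n hn v t0 t1 t2 t3 hv
end

section
/- Let r, s ≥ 0 be integers with n = 2(r+s) ≥ 1, and let v ∈ (ℤ/4ℤ)^n have type (0, t₁, 0, t₃) (so every coordinate of v is 1 or 3, and t₁ + t₃ = n). Then C(n, 2s) · λ(v) = (−1)^r · C(n; r,s,r,s) · K_{2s}(t₃), where K_{2s} is the binary Krawtchouk polynomial with parameter n. -/
/-- The binary Krawtchouk polynomial `K_j` with parameter `n`, as a rational
function: `K_j(x) = Σ_{i=0}^{j} (-1)^i C(x,i) C(n-x, j-i)`. -/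
noncomputable def krawQ (n j : ℕ) (x : ℚ) : ℚ :=
  ∑ i ∈ Finset.range (j + 1),
    (-1 : ℚ) ^ i * ((descPochhammer ℚ i).eval x / (i.factorial : ℚ)) *
      ((descPochhammer ℚ (j - i)).eval ((n : ℚ) - x) / ((j - i).factorial : ℚ))

/-! If every coordinate of `v` is odd and `R = {i | v i = 3}`, then for `b` of type `(r, s, r, s)`
with odd support `O(b)` one has `v · b = Σ bᵢ + 2 |O(b) ∩ R| = 2 (r + |O(b) ∩ R|)` in `ℤ/4ℤ`, so
`λ(v) = (-1)^r Σ_b (-1)^{|O(b) ∩ R|}`. Every `2s`-subset `O` is the odd support of exactly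
`C(2s, s) C(2r, r)` such `b` (place the `1`s inside `O` and the `0`s outside), and splitting `O`
along `R` gives `Σ_{|O| = 2s} (-1)^{|O ∩ R|} = K_{2s}(|R|)`. Finally
`C(n, 2s) C(2s, s) C(2r, r) = C(n; r, s, r, s)`. -/

open Finset

lemma ZMod.sum_univ_four {M : Type*} [AddCommMonoid M] (f : ZMod 4 → M) :
    ∑ k, f k = f 0 + f 1 + f 2 + f 3 :=
  Fin.sum_univ_four f

/-- `reIPow a` is the real part of `i ^ a`. -/
def reIPow : ZMod 4 → ℤ := fun a => if a = 0 then 1 else if a = 2 then -1 else 0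

lemma reIPow_add_two : ∀ a : ZMod 4, reIPow (a + 2) = -reIPow a := by decide

lemma reIPow_two_mul_natCast (m : ℕ) : reIPow (2 * m) = (-1) ^ m := by
  induction m with
  | zero => rfl
  | succ m ih => rw [Nat.cast_succ, mul_add_one, reIPow_add_two, ih, pow_succ, mul_neg_one]

section

variable {n : ℕ}

lemma lambdaEV_eq_sum_reIPow (r s : ℕ) (v : Fin n → ZMod 4) :
    lambdaEV r s v = ∑ b ∈ univ.filter (HasType · r s r s), reIPow (∑ i, v i * b i) := by
  have h : ∀ a : ZMod 4, reIPow a = (if a = 0 then 1 else 0) - (if a = 2 then 1 else 0) := by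
    decide
  simp only [h, sum_sub_distrib, sum_boole, filter_filter]
  rfl

lemma typeCount_eq_zero {v : Fin n → ZMod 4} {k : ZMod 4} :
    typeCount v k = 0 ↔ ∀ i, v i ≠ k := by
  simp [typeCount, filter_eq_empty_iff]

lemma sum_typeCount (v : Fin n → ZMod 4) : ∑ k, typeCount v k = n := by
  unfold typeCount
  rw [← card_eq_sum_card_fiberwise (fun _ _ => mem_univ _), card_univ, Fintype.card_fin]

lemma HasType.add_eq {v : Fin n → ZMod 4} {t0 t1 t2 t3 : ℕ} (hv : HasType v t0 t1 t2 t3) :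
    t0 + t1 + t2 + t3 = n := by
  obtain ⟨h0, h1, h2, h3⟩ := hv
  rw [← sum_typeCount v, ZMod.sum_univ_four, h0, h1, h2, h3]

lemma HasType.sum_eq {v : Fin n → ZMod 4} {t0 t1 t2 t3 : ℕ} (hv : HasType v t0 t1 t2 t3) :
    ∑ i, v i = t1 + 2 * t2 + 3 * t3 := by
  obtain ⟨-, h1, h2, h3⟩ := hv
  have hk : ∀ k, ∑ i ∈ univ.filter (v · = k), v i = typeCount v k • k := fun k => by
    rw [sum_congr rfl fun i hi => (mem_filter.mp hi).2, sum_const]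
    rfl
  rw [← sum_fiberwise univ v v, ZMod.sum_univ_four]
  simp only [hk, h1, h2, h3, nsmul_eq_mul]
  ring

lemma HasType.odd {v : Fin n → ZMod 4} {t1 t3 : ℕ} (hv : HasType v 0 t1 0 t3) (i : Fin n) :
    v i = 1 ∨ v i = 3 := by
  have h0 := typeCount_eq_zero.mp hv.1 i
  have h2 := typeCount_eq_zero.mp hv.2.2.1 i
  generalize v i = x at h0 h2
  decide +revert

def oddSupport (b : Fin n → ZMod 4) : Finset (Fin n) :=
  univ.filter fun i => b i = 1 ∨ b i = 3

lemma card_oddSupport (b : Fin n → ZMod 4) :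
    #(oddSupport b) = typeCount b 1 + typeCount b 3 := by
  rw [oddSupport, filter_or, card_union_of_disjoint (disjoint_filter.mpr fun i _ h => by
    rw [h]; decide)]
  rfl

lemma dot_eq_sum_add_two_mul_card {v : Fin n → ZMod 4} (hv : ∀ i, v i = 1 ∨ v i = 3)
    (b : Fin n → ZMod 4) :
    ∑ i, v i * b i = ∑ i, b i + 2 * #(oddSupport b ∩ univ.filter (v · = 3)) := by
  have key : ∀ x y : ZMod 4, (x = 1 ∨ x = 3) →
      x * y = y + 2 * if (y = 1 ∨ y = 3) ∧ x = 3 then 1 else 0 := by decide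
  rw [sum_congr rfl fun i _ => key _ _ (hv i), sum_add_distrib, ← mul_sum, sum_boole,
    oddSupport, ← filter_and]

lemma lambdaEV_eq_of_forall_odd (r s : ℕ) {v : Fin n → ZMod 4} (hv : ∀ i, v i = 1 ∨ v i = 3) :
    lambdaEV r s v = (-1) ^ r * ∑ b ∈ univ.filter (HasType · r s r s),
      (-1) ^ #(oddSupport b ∩ univ.filter (v · = 3)) := by
  rw [lambdaEV_eq_sum_reIPow, mul_sum]
  refine sum_congr rfl fun b hb => ?_
  set k := #(oddSupport b ∩ univ.filter (v · = 3))
  have hdot : ∑ i, v i * b i = 2 * ((r + 2 * s + k : ℕ) : ZMod 4) := by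
    rw [dot_eq_sum_add_two_mul_card hv, (mem_filter.mp hb).2.sum_eq]
    push_cast
    ring
  rw [hdot, reIPow_two_mul_natCast, pow_add, pow_add, pow_mul]
  norm_num

def ofParts (O U Z : Finset (Fin n)) : Fin n → ZMod 4 :=
  fun i => if i ∈ U then 1 else if i ∈ O then 3 else if i ∈ Z then 0 else 2

lemma preimages_ofParts {O U Z : Finset (Fin n)} (hU : U ⊆ O) (hZ : Z ⊆ Oᶜ) :
    univ.filter (ofParts O U Z · = 0) = Z ∧ univ.filter (ofParts O U Z · = 1) = U ∧
    univ.filter (ofParts O U Z · = 2) = Oᶜ \ Z ∧ univ.filter (ofParts O U Z · = 3) = O \ U ∧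
    oddSupport (ofParts O U Z) = O := by
  refine ⟨?_, ?_, ?_, ?_, ?_⟩ <;> ext i <;> have hUi := @hU i <;> have hZi := @hZ i <;>
    simp only [oddSupport, mem_filter_univ, mem_sdiff, mem_compl] at hZi ⊢ <;>
    unfold ofParts <;> split_ifs <;> simp_all +decide

lemma card_hasType_oddSupport_eq {r s : ℕ} (hn : n = 2 * (r + s)) {O : Finset (Fin n)}
    (hO : #O = 2 * s) :
    #(univ.filter fun b => HasType b r s r s ∧ oddSupport b = O) =
      (2 * s).choose s * (2 * r).choose r := by
  have hOc : #Oᶜ = 2 * r := by rw [card_compl, Fintype.card_fin, hO]; omega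
  rw [← hO, ← hOc, ← card_powersetCard, ← card_powersetCard, ← card_product]
  refine card_nbij' (fun b => (univ.filter (b · = 1), univ.filter (b · = 0)))
    (fun p => ofParts O p.1 p.2) ?_ ?_ ?_ ?_ <;>
    simp only [Set.MapsTo, Set.LeftInvOn, mem_coe, mem_product, mem_powersetCard,
      mem_filter_univ, Prod.forall]
  · rintro b ⟨⟨h0, h1, -, -⟩, rfl⟩
    refine ⟨⟨fun i => ?_, h1⟩, fun i => ?_, h0⟩ <;> simp +contextual +decide [oddSupport]
  · rintro U Z ⟨⟨hUO, hU⟩, ⟨hZO, hZ⟩⟩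
    obtain ⟨e0, e1, e2, e3, eO⟩ := preimages_ofParts hUO hZO
    refine ⟨⟨?_, ?_, ?_, ?_⟩, eO⟩ <;> unfold typeCount
    · rw [e0, hZ]
    · rw [e1, hU]
    · rw [e2, card_sdiff_of_subset hZO, hZ, hOc]; omega
    · rw [e3, card_sdiff_of_subset hUO, hU, hO]; omega
  · rintro b ⟨-, rfl⟩
    funext i
    simp only [ofParts, oddSupport, mem_filter_univ]
    generalize b i = x
    decide +revert
  · rintro U Z ⟨⟨hUO, -⟩, ⟨hZO, -⟩⟩
    obtain ⟨e0, e1, -, -, -⟩ := preimages_ofParts hUO hZO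
    rw [e0, e1]

lemma sum_hasType_eq_smul_sum_powersetCard {M : Type*} [AddCommMonoid M] {r s : ℕ}
    (hn : n = 2 * (r + s)) (f : Finset (Fin n) → M) :
    ∑ b ∈ univ.filter (HasType · r s r s), f (oddSupport b) =
      ((2 * s).choose s * (2 * r).choose r) • ∑ O ∈ powersetCard (2 * s) univ, f O := by
  have hmaps : ∀ b : Fin n → ZMod 4, b ∈ univ.filter (HasType · r s r s) →
      oddSupport b ∈ powersetCard (2 * s) univ := by
    intro b hb
    obtain ⟨-, h1, -, h3⟩ := (mem_filter.mp hb).2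
    rw [mem_powersetCard, card_oddSupport, h1, h3]
    exact ⟨subset_univ _, by omega⟩
  rw [← sum_fiberwise_of_maps_to hmaps, smul_sum]
  refine sum_congr rfl fun O hO => ?_
  rw [sum_congr rfl fun b hb => congrArg f (mem_filter.mp hb).2, sum_const, filter_filter,
    card_hasType_oddSupport_eq hn (mem_powersetCard.mp hO).2]

end

section Subsets
variable {α : Type*} [Fintype α] [DecidableEq α]

lemma card_powersetCard_filter_card_inter (R : Finset α) {m q : ℕ} (hq : q ≤ m) :
    #((powersetCard m univ).filter (fun O => #(O ∩ R) = q)) =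
      (#R).choose q * (#Rᶜ).choose (m - q) := by
  rw [← card_powersetCard q R, ← card_powersetCard (m - q) Rᶜ, ← card_product]
  refine card_nbij' (fun O => (O ∩ R, O \ R)) (fun p => p.1 ∪ p.2) ?_ ?_ ?_ ?_ <;>
    simp only [Set.MapsTo, Set.LeftInvOn, mem_coe, mem_product, mem_powersetCard,
      mem_filter, Prod.forall, subset_univ, true_and, subset_compl_iff_disjoint_right]
  · rintro O ⟨rfl, rfl⟩
    have := card_inter_add_card_sdiff O R
    exact ⟨⟨inter_subset_right, rfl⟩, sdiff_disjoint, by omega⟩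
  · rintro A B ⟨⟨hAR, rfl⟩, hBR, hB⟩
    have hAB : Disjoint A B := disjoint_of_subset_left hAR hBR.symm
    rw [card_union_of_disjoint hAB, union_inter_distrib_right, inter_eq_left.mpr hAR,
      disjoint_iff_inter_eq_empty.mp hBR, union_empty]
    omega
  · intro O _
    exact sup_inf_sdiff O R
  · rintro A B ⟨⟨hAR, -⟩, hBR, -⟩
    rw [union_inter_distrib_right, inter_eq_left.mpr hAR, disjoint_iff_inter_eq_empty.mp hBR,
      union_empty, union_sdiff_distrib, sdiff_eq_empty_iff_subset.mpr hAR, empty_union,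
      sdiff_eq_self_of_disjoint hBR]

lemma sum_powersetCard_neg_one_pow_card_inter {M : Type*} [CommRing M] (R : Finset α) (m : ℕ) :
    ∑ O ∈ powersetCard m univ, (-1 : M) ^ #(O ∩ R) =
      ∑ q ∈ range (m + 1), (-1) ^ q * ((#R).choose q * (#Rᶜ).choose (m - q) : M) := by
  have hmaps : ∀ O ∈ powersetCard m (univ : Finset α), #(O ∩ R) ∈ range (m + 1) := by
    intro O hO
    rw [mem_range, Nat.lt_succ_iff, ← (mem_powersetCard.mp hO).2]
    exact card_le_card inter_subset_left
  rw [← sum_fiberwise_of_maps_to hmaps]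
  refine sum_congr rfl fun q hq => ?_
  rw [sum_congr rfl fun O hO => congrArg _ (mem_filter.mp hO).2, sum_const,
    card_powersetCard_filter_card_inter R (Nat.lt_succ_iff.mp (mem_range.mp hq)), nsmul_eq_mul]
  push_cast
  ring

end Subsets

lemma multinomRSRS_eq (r s : ℕ) :
    multinomRSRS r s = (2 * (r + s)).choose (2 * s) * (2 * s).choose s * (2 * r).choose r := by
  have hspec := Nat.multinomial_spec (univ : Finset (Fin 4)) ![r, s, r, s]
  simp only [Fin.prod_univ_four, Fin.sum_univ_four, Matrix.cons_val] at hspec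
  have hr := Nat.add_choose_mul_factorial_mul_factorial r r
  have hs := Nat.add_choose_mul_factorial_mul_factorial s s
  have hrs := Nat.add_choose_mul_factorial_mul_factorial (r + r) (s + s)
  refine Nat.eq_of_mul_eq_mul_left
    (by positivity : 0 < r.factorial * s.factorial * r.factorial * s.factorial) ?_
  rw [multinomRSRS, hspec, show r + s + r + s = r + r + (s + s) by ring,
    show 2 * (r + s) = r + r + (s + s) by ring, two_mul, two_mul, ← hrs, ← hr, ← hs]
  ring

lemma krawQ_natCast {n j t1 t3 : ℕ} (h : t1 + t3 = n) :
    krawQ n j t3 = ∑ i ∈ range (j + 1), (-1) ^ i * ((t3.choose i : ℚ) * t1.choose (j - i)) := by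
  refine sum_congr rfl fun i _ => ?_
  rw [show (n : ℚ) - t3 = t1 by rw [← h]; push_cast; ring,
    descPochhammer_eval_eq_descFactorial, descPochhammer_eval_eq_descFactorial,
    Nat.descFactorial_eq_factorial_mul_choose, Nat.descFactorial_eq_factorial_mul_choose]
  push_cast
  field_simp

theorem lambda_of_type_0t10t3_general (r s n : ℕ) (hn : n = 2 * (r + s))
    (v : Fin n → ZMod 4) (t1 t3 : ℕ) (hv : HasType v 0 t1 0 t3) :
    (n.choose (2 * s) : ℚ) * (lambdaEV r s v : ℚ) =
      (-1 : ℚ) ^ r * (multinomRSRS r s : ℚ) * krawQ n (2 * s) (t3 : ℚ) := by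
  set R := univ.filter (v · = 3)
  have hR : #R = t3 := hv.2.2.2
  have ht : t1 + t3 = n := by simpa using hv.add_eq
  have hRc : #Rᶜ = t1 := by rw [card_compl, Fintype.card_fin, hR]; omega
  rw [lambdaEV_eq_of_forall_odd r s hv.odd,
    sum_hasType_eq_smul_sum_powersetCard hn (fun O => (-1 : ℤ) ^ #(O ∩ R)),
    sum_powersetCard_neg_one_pow_card_inter, hR, hRc, krawQ_natCast ht, multinomRSRS_eq, ← hn]
  push_cast [nsmul_eq_mul]
  ring

/-- for `v` of type `(0, t₁, 0, t₃)`,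
`C(n, 2s)·λ(v) = (-1)^r · C(n; r,s,r,s) · K_{2s}(t₃)`. -/
theorem lambda_of_type_0t10t3 (r s n : ℕ) (hn : n = 2 * (r + s)) (hn1 : 1 ≤ n)
    (v : Fin n → ZMod 4) (t1 t3 : ℕ) (hv : HasType v 0 t1 0 t3) :
    (n.choose (2 * s) : ℚ) * (lambdaEV r s v : ℚ) =
      (-1 : ℚ) ^ r * (multinomRSRS r s : ℚ) * krawQ n (2 * s) (t3 : ℚ) :=
  lambda_of_type_0t10t3_general r s n hn v t1 t3 hv
end
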